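/- arXiv:2409.17914 — 4 statements merged into one kernel-verified Lean document; each statement's English description precedes it below -/
import Mathlib

section
/- The function F defined by F(x) = ((6π²)^{1/3}/35) · (16 x^{7/3} ln x − 48 (x^{7/3}+1) ln(1+x^{1/3}) + 6(15 x^{1/3} − 4x^{2/3} + 33x + 33x^{4/3} − 4x^{5/3} + 15x²) + 21(1 − 6x^{2/3} + 5x + 5x^{4/3} − 6x^{5/3} + x^{7/3}) ln(|1−x^{1/3}|/(1+x^{1/3}))) satisfies the symmetry F(1/x) = x^{−7/3} F(x) for all x > 0 with x ≠ 1. -/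
/-- The Huang--Yang function `F`. -/
noncomputable def F (x : ℝ) : ℝ :=
  ((6 * Real.pi ^ 2) ^ ((1:ℝ)/3) / 35) *
    (16 * x ^ ((7:ℝ)/3) * Real.log x
      - 48 * (x ^ ((7:ℝ)/3) + 1) * Real.log (1 + x ^ ((1:ℝ)/3))
      + 6 * (15 * x ^ ((1:ℝ)/3) - 4 * x ^ ((2:ℝ)/3) + 33 * x + 33 * x ^ ((4:ℝ)/3)
          - 4 * x ^ ((5:ℝ)/3) + 15 * x ^ (2:ℝ))
      + 21 * (1 - 6 * x ^ ((2:ℝ)/3) + 5 * x + 5 * x ^ ((4:ℝ)/3) - 6 * x ^ ((5:ℝ)/3)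
          + x ^ ((7:ℝ)/3)) * Real.log (|1 - x ^ ((1:ℝ)/3)| / (1 + x ^ ((1:ℝ)/3))))

theorem F_symmetry (x : ℝ) (hx : 0 < x) (hx1 : x ≠ 1) :
    F (1 / x) = x ^ (-(7:ℝ)/3) * F x := by
  obtain ⟨y, hy0, rfl⟩ : ∃ y : ℝ, 0 < y ∧ x = y ^ 3 :=
    ⟨x ^ ((1:ℝ)/3), Real.rpow_pos_of_pos hx _, by
      rw [← Real.rpow_natCast (x ^ ((1:ℝ)/3)) 3, ← Real.rpow_mul hx.le]; norm_num⟩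
  have h30 : (0:ℝ) ≤ y ^ 3 := (pow_pos hy0 3).le
  have key : ∀ n : ℕ, ((y:ℝ) ^ 3) ^ ((n:ℝ)/3) = y ^ n := by
    intro n
    rw [← Real.rpow_natCast y 3, ← Real.rpow_mul hy0.le, ← Real.rpow_natCast y n]
    congr 1; push_cast; ring
  have key' : ∀ n : ℕ, (1/((y:ℝ)^3)) ^ ((n:ℝ)/3) = (y ^ n)⁻¹ := by
    intro n
    rw [one_div, Real.inv_rpow h30, key n]
  have hlogx : Real.log ((y:ℝ)^3) = 3 * Real.log y := by
    rw [Real.log_pow]; push_cast; ring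
  have h1y : (0:ℝ) < 1 + y := by linarith
  have hlog1 : Real.log (1 + y⁻¹) = Real.log (1 + y) - Real.log y := by
    have : 1 + y⁻¹ = (1 + y) / y := by field_simp; ring
    rw [this, Real.log_div h1y.ne' hy0.ne']
  have habs : |1 - y⁻¹| / (1 + y⁻¹) = |1 - y| / (1 + y) := by
    have h1 : |1 - y⁻¹| = |1 - y| / y := by
      rw [show (1 - y⁻¹) = (y - 1)/y by field_simp, abs_div, abs_of_pos hy0,
        abs_sub_comm]
    rw [h1, show (1 + y⁻¹) = (1 + y)/y by field_simp; ring]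
    field_simp
  have hxm : ((y:ℝ)^3) ^ (-(7:ℝ)/3) = (y ^ 7)⁻¹ := by
    rw [show (-(7:ℝ)/3) = -(((7:ℕ):ℝ)/3) by norm_num, Real.rpow_neg h30, key 7]
  have h7 : ((y:ℝ)^3) ^ ((7:ℝ)/3) = y ^ 7 := by
    rw [show ((7:ℝ)/3) = ((7:ℕ):ℝ)/3 by norm_num, key]
  have h2 : ((y:ℝ)^3) ^ ((2:ℝ)/3) = y ^ 2 := by
    rw [show ((2:ℝ)/3) = ((2:ℕ):ℝ)/3 by norm_num, key]
  have h4 : ((y:ℝ)^3) ^ ((4:ℝ)/3) = y ^ 4 := by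
    rw [show ((4:ℝ)/3) = ((4:ℕ):ℝ)/3 by norm_num, key]
  have h5 : ((y:ℝ)^3) ^ ((5:ℝ)/3) = y ^ 5 := by
    rw [show ((5:ℝ)/3) = ((5:ℕ):ℝ)/3 by norm_num, key]
  have h6 : ((y:ℝ)^3) ^ ((2:ℝ)) = y ^ 6 := by
    rw [show ((2:ℝ)) = ((6:ℕ):ℝ)/3 by norm_num, key]
  have h1' : ((y:ℝ)^3) ^ ((1:ℝ)/3) = y := by
    rw [show ((1:ℝ)/3) = ((1:ℕ):ℝ)/3 by norm_num, key]; exact pow_one y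
  have k1 : (1/((y:ℝ)^3)) ^ ((1:ℝ)/3) = y⁻¹ := by
    rw [show ((1:ℝ)/3) = ((1:ℕ):ℝ)/3 by norm_num, key']; rw [pow_one]
  have k7 : (1/((y:ℝ)^3)) ^ ((7:ℝ)/3) = (y ^ 7)⁻¹ := by
    rw [show ((7:ℝ)/3) = ((7:ℕ):ℝ)/3 by norm_num, key']
  have k2 : (1/((y:ℝ)^3)) ^ ((2:ℝ)/3) = (y ^ 2)⁻¹ := by
    rw [show ((2:ℝ)/3) = ((2:ℕ):ℝ)/3 by norm_num, key']
  have k4 : (1/((y:ℝ)^3)) ^ ((4:ℝ)/3) = (y ^ 4)⁻¹ := by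
    rw [show ((4:ℝ)/3) = ((4:ℕ):ℝ)/3 by norm_num, key']
  have k5 : (1/((y:ℝ)^3)) ^ ((5:ℝ)/3) = (y ^ 5)⁻¹ := by
    rw [show ((5:ℝ)/3) = ((5:ℕ):ℝ)/3 by norm_num, key']
  have k6 : (1/((y:ℝ)^3)) ^ ((2:ℝ)) = (y ^ 6)⁻¹ := by
    rw [show ((2:ℝ)) = ((6:ℕ):ℝ)/3 by norm_num, key']
  have hlog1x : Real.log (1/((y:ℝ)^3)) = -(3 * Real.log y) := by
    rw [one_div, Real.log_inv, hlogx]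
  unfold F
  rw [k1, k7, k2, k4, k5, k6, hxm, h7, h2, h4, h5, h6, h1', hlogx, hlog1x, hlog1, habs]
  have hyne : y ≠ 0 := hy0.ne'
  field_simp
  ring
end

section
/- There exists a constant C such that for all 0 < x ≤ 1, the integral over p ∈ ℝ³, over r ∈ ℝ³ with |r| < 1 < |r+p|, and over r' ∈ ℝ³ with |r'| < x < |r'−p|, of 1/(|r+p|² − |r|² + |r'−p|² − |r'|²)², is finite and bounded by C uniformly in x. -/
set_option maxHeartbeats 1000000

open MeasureTheory Set Real
open scoped InnerProductSpace

lemma oneD (q R e : ℝ) (hq : 0 < q) (hR : -(q/2) < R) (he : -1 < e) :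
    ∫⁻ u in Set.Ioo (-(q/2)) R, ENNReal.ofReal ((2*q*u + q^2) ^ e) =
      ENNReal.ofReal ((2*q*R + q^2) ^ (e+1) / ((e+1) * (2*q))) := by
  have h2q : (2*q) ≠ 0 := by positivity
  have he1 : 0 < e + 1 := by linarith
  -- interval integrability
  have hii : IntervalIntegrable (fun u => (2*q*u + q^2) ^ e) volume (-(q/2)) R := by
    have h0 : IntervalIntegrable (fun x : ℝ => x ^ e) volume 0 (2*q*R + q^2) :=
      intervalIntegral.intervalIntegrable_rpow' he
    have h1 := h0.comp_add_right (q^2)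
    have h2 := h1.comp_mul_left (c := 2*q)
    have e1 : (0 - q^2) / (2*q) = -(q/2) := by field_simp; ring
    have e2 : (2*q*R + q^2 - q^2) / (2*q) = R := by field_simp; ring
    rw [e1, e2] at h2
    exact h2.congr (fun _ _ => rfl)
  have hIoo : IntegrableOn (fun u => (2*q*u + q^2) ^ e) (Set.Ioo (-(q/2)) R) volume := by
    have := (intervalIntegrable_iff_integrableOn_Ioo_of_le hR.le).mp hii
    exact this
  have hnn : 0 ≤ᵐ[volume.restrict (Set.Ioo (-(q/2)) R)] fun u => (2*q*u + q^2) ^ e := by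
    filter_upwards [ae_restrict_mem measurableSet_Ioo] with u hu
    have : 0 < 2*q*u + q^2 := by nlinarith [hu.1]
    positivity
  rw [← ofReal_integral_eq_lintegral_ofReal hIoo hnn]
  congr 1
  have : ∫ u in Set.Ioo (-(q/2)) R, (2*q*u + q^2) ^ e =
      ∫ u in (-(q/2))..R, (2*q*u + q^2) ^ e := by
    rw [intervalIntegral.integral_of_le hR.le, integral_Ioc_eq_integral_Ioo]
  rw [this, intervalIntegral.integral_comp_mul_add (fun x => x ^ e) h2q (q^2)]
  have e1 : 2*q*(-(q/2)) + q^2 = 0 := by ring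
  rw [e1, integral_rpow (Or.inl he)]
  rw [Real.zero_rpow (by linarith : e + 1 ≠ 0)]
  simp only [smul_eq_mul, sub_zero]
  field_simp

lemma vol_ball2 (r : ℝ) (hr : 0 ≤ r) :
    volume (Metric.ball (0 : EuclideanSpace ℝ (Fin 2)) r)
      = ENNReal.ofReal π * ENNReal.ofReal (r^2) := by
  rw [EuclideanSpace.volume_ball]
  have hcard : Fintype.card (Fin 2) = 2 := by simp
  rw [hcard]
  have : ((2:ℕ) : ℝ) / 2 + 1 = 2 := by norm_num
  rw [this, Real.Gamma_two, ← ENNReal.ofReal_pow hr, mul_comm]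
  congr 1
  rw [div_one, sq_sqrt Real.pi_nonneg]

lemma vol_annulus (c d : ℝ) :
    volume {w : Fin 2 → ℝ | c < w 0^2 + w 1^2 ∧ w 0^2 + w 1^2 < d} ≤
      ENNReal.ofReal π * ENNReal.ofReal (d - c) := by
  have hmp := (EuclideanSpace.volume_preserving_symm_measurableEquiv_toLp (Fin 2))
  set S : Set (Fin 2 → ℝ) := {w | c < w 0^2 + w 1^2 ∧ w 0^2 + w 1^2 < d} with hS
  have hmeas : MeasurableSet S := by
    apply MeasurableSet.inter
    · exact measurableSet_lt measurable_const
        (((measurable_pi_apply 0).pow_const 2).add ((measurable_pi_apply 1).pow_const 2))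
    · exact measurableSet_lt
        (((measurable_pi_apply 0).pow_const 2).add ((measurable_pi_apply 1).pow_const 2))
        measurable_const
  rw [← hmp.measure_preimage hmeas.nullMeasurableSet]
  have hpre : (MeasurableEquiv.toLp 2 (Fin 2 → ℝ)).symm ⁻¹' S
      = {y : EuclideanSpace ℝ (Fin 2) | c < ‖y‖^2 ∧ ‖y‖^2 < d} := by
    ext y
    have hn : ‖y‖^2 = (y 0)^2 + (y 1)^2 := by
      rw [EuclideanSpace.norm_eq, Real.sq_sqrt (by positivity)]
      simp [Fin.sum_univ_two, sq_abs]
    simp only [Set.mem_preimage, hS, Set.mem_setOf_eq, hn]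
    rfl
  rw [hpre]
  rcases le_or_gt d 0 with hd | hd
  · have : {y : EuclideanSpace ℝ (Fin 2) | c < ‖y‖^2 ∧ ‖y‖^2 < d} = ∅ := by
      ext y; simp only [Set.mem_setOf_eq, Set.mem_empty_iff_false, iff_false]
      rintro ⟨-, h2⟩; nlinarith [sq_nonneg ‖y‖]
    simp [this]
  · have hsub : {y : EuclideanSpace ℝ (Fin 2) | c < ‖y‖^2 ∧ ‖y‖^2 < d}
        ⊆ Metric.ball 0 (Real.sqrt d) := by
      rintro y ⟨-, h2⟩
      rw [Metric.mem_ball, dist_zero_right]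
      have := Real.sqrt_lt_sqrt (sq_nonneg ‖y‖) h2
      rwa [Real.sqrt_sq (norm_nonneg y)] at this
    rcases le_or_gt c 0 with hc | hc
    · calc volume {y : EuclideanSpace ℝ (Fin 2) | c < ‖y‖^2 ∧ ‖y‖^2 < d}
          ≤ volume (Metric.ball (0 : EuclideanSpace ℝ (Fin 2)) (Real.sqrt d)) :=
            measure_mono hsub
        _ = ENNReal.ofReal π * ENNReal.ofReal d := by
            rw [vol_ball2 _ (Real.sqrt_nonneg d), Real.sq_sqrt hd.le]
        _ ≤ ENNReal.ofReal π * ENNReal.ofReal (d - c) := by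
            gcongr; linarith
    · rcases le_or_gt d c with hdc | hdc
      · have : {y : EuclideanSpace ℝ (Fin 2) | c < ‖y‖^2 ∧ ‖y‖^2 < d} = ∅ := by
          ext y; simp only [Set.mem_setOf_eq, Set.mem_empty_iff_false, iff_false]
          rintro ⟨h1, h2⟩; linarith
        simp [this]
      -- 0 < c < d : disjoint from ball √c
      have hdisj : Disjoint {y : EuclideanSpace ℝ (Fin 2) | c < ‖y‖^2 ∧ ‖y‖^2 < d}
          (Metric.ball 0 (Real.sqrt c)) := by
        rw [Set.disjoint_left]
        rintro y ⟨h1, -⟩ hy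
        rw [Metric.mem_ball, dist_zero_right] at hy
        have : ‖y‖^2 < c := by
          have := mul_self_lt_mul_self (norm_nonneg y) hy
          rw [Real.mul_self_sqrt hc.le] at this
          nlinarith
        linarith
      have hunion : {y : EuclideanSpace ℝ (Fin 2) | c < ‖y‖^2 ∧ ‖y‖^2 < d}
          ∪ Metric.ball 0 (Real.sqrt c) ⊆ Metric.ball 0 (Real.sqrt d) := by
        apply Set.union_subset hsub
        apply Metric.ball_subset_ball
        exact Real.sqrt_le_sqrt (by linarith)
      have hm2 : volume ({y : EuclideanSpace ℝ (Fin 2) | c < ‖y‖^2 ∧ ‖y‖^2 < d}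
            ∪ Metric.ball 0 (Real.sqrt c))
          = volume {y : EuclideanSpace ℝ (Fin 2) | c < ‖y‖^2 ∧ ‖y‖^2 < d}
            + volume (Metric.ball (0 : EuclideanSpace ℝ (Fin 2)) (Real.sqrt c)) :=
        measure_union hdisj Metric.isOpen_ball.measurableSet
      have hle : volume {y : EuclideanSpace ℝ (Fin 2) | c < ‖y‖^2 ∧ ‖y‖^2 < d}
            + ENNReal.ofReal π * ENNReal.ofReal c
          ≤ ENNReal.ofReal π * ENNReal.ofReal d := by
        calc volume {y : EuclideanSpace ℝ (Fin 2) | c < ‖y‖^2 ∧ ‖y‖^2 < d}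
              + ENNReal.ofReal π * ENNReal.ofReal c
            = volume ({y : EuclideanSpace ℝ (Fin 2) | c < ‖y‖^2 ∧ ‖y‖^2 < d}
                ∪ Metric.ball 0 (Real.sqrt c)) := by
              rw [hm2, vol_ball2 _ (Real.sqrt_nonneg c), Real.sq_sqrt hc.le]
          _ ≤ volume (Metric.ball (0 : EuclideanSpace ℝ (Fin 2)) (Real.sqrt d)) :=
              measure_mono hunion
          _ = ENNReal.ofReal π * ENNReal.ofReal d := by
              rw [vol_ball2 _ (Real.sqrt_nonneg d), Real.sq_sqrt hd.le]
      have hsub2 := ENNReal.le_sub_of_add_le_right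
        (ENNReal.mul_ne_top ENNReal.ofReal_ne_top ENNReal.ofReal_ne_top) hle
      calc volume {y : EuclideanSpace ℝ (Fin 2) | c < ‖y‖^2 ∧ ‖y‖^2 < d}
          ≤ ENNReal.ofReal π * ENNReal.ofReal d - ENNReal.ofReal π * ENNReal.ofReal c := hsub2
        _ = ENNReal.ofReal π * (ENNReal.ofReal d - ENNReal.ofReal c) := by
            rw [ENNReal.mul_sub]; intro _ _; exact ENNReal.ofReal_ne_top
        _ ≤ ENNReal.ofReal π * ENNReal.ofReal (d - c) := by
            gcongr
            rw [ENNReal.ofReal_sub _ hc.le]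

noncomputable abbrev E3 := EuclideanSpace ℝ (Fin 3)

lemma exists_basis (q : E3) (hq : q ≠ 0) :
    ∃ b : OrthonormalBasis (Fin 3) ℝ E3, b 0 = ‖q‖⁻¹ • q := by
  have hn : ‖q‖ ≠ 0 := norm_ne_zero_iff.mpr hq
  have hcard : Module.finrank ℝ E3 = Fintype.card (Fin 3) := by
    simp [finrank_euclideanSpace]
  have horth : Orthonormal ℝ (({0} : Set (Fin 3)).restrict (fun _ : Fin 3 => ‖q‖⁻¹ • q)) := by
    constructor
    · intro i
      show ‖‖q‖⁻¹ • q‖ = 1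
      rw [norm_smul, norm_inv, norm_norm, inv_mul_cancel₀ hn]
    · intro i j hij
      exact absurd (Subtype.ext (by
        have hi := i.2; have hj := j.2
        simp only [Set.mem_singleton_iff] at hi hj
        rw [hi, hj])) hij
  obtain ⟨b, hb⟩ := Orthonormal.exists_orthonormalBasis_extension_of_card_eq hcard horth
  exact ⟨b, hb 0 rfl⟩

lemma core (q : E3) (hq : q ≠ 0) (R : ℝ) (hR : 0 < R) (g : ℝ → ENNReal) (hg : Measurable g) :
    ∫⁻ r in {r : E3 | ‖r‖ < R ∧ R < ‖r + q‖}, g (‖r + q‖^2 - ‖r‖^2) ≤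
      ENNReal.ofReal π * ∫⁻ u in Set.Ioo (-(‖q‖/2)) R,
        g (2*‖q‖*u + ‖q‖^2) * ENNReal.ofReal (2*‖q‖*u + ‖q‖^2) := by
  obtain ⟨b, hb0⟩ := exists_basis q hq
  set n := ‖q‖ with hn
  have hn0 : 0 < n := norm_pos_iff.mpr hq
  -- coordinate facts
  have hrepr0 : ∀ r : E3, b.repr r 0 = ⟪b 0, r⟫_ℝ := fun r => b.repr_apply_apply r 0
  have hkey : ∀ r : E3, ‖r + q‖^2 = ‖r‖^2 + (2*n*(b.repr r 0) + n^2) := by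
    intro r
    have h1 : ‖r + q‖^2 = ‖r‖^2 + 2*⟪r, q⟫_ℝ + ‖q‖^2 := norm_add_sq_real r q
    have h2 : ⟪r, q⟫_ℝ = n * (b.repr r 0) := by
      rw [hrepr0, hb0, real_inner_smul_left, real_inner_comm]
      field_simp
    rw [h1, h2]; ring
  have hnorm_sq : ∀ r : E3, ‖r‖^2 = (b.repr r 0)^2 + (b.repr r 1)^2 + (b.repr r 2)^2 := by
    intro r
    have h1 : ‖r‖ = ‖b.repr r‖ := (b.repr.norm_map r).symm
    rw [h1, EuclideanSpace.norm_eq, Real.sq_sqrt (by positivity)]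
    simp [Fin.sum_univ_three, sq_abs]
  -- the measure-preserving chain
  set T := MeasurableEquiv.piFinSuccAbove (fun _ : Fin 3 => ℝ) 0 with hT
  set φ := (MeasurableEquiv.toLp 2 (Fin 3 → ℝ)).symm with hφ
  set bm := b.measurableEquiv with hbm
  have hΨ : MeasurePreserving (⇑T ∘ ⇑φ ∘ ⇑bm) volume volume :=
    (volume_preserving_piFinSuccAbove (fun _ : Fin 3 => ℝ) 0).comp
      ((EuclideanSpace.volume_preserving_symm_measurableEquiv_toLp (Fin 3)).comp
        b.measurePreserving_measurableEquiv)
  -- components of the composite map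
  have hcomp : ∀ r : E3, (T (φ (bm r))).1 = b.repr r 0 ∧
      ((T (φ (bm r))).2 0 = b.repr r 1) ∧ ((T (φ (bm r))).2 1 = b.repr r 2) := by
    intro r
    refine ⟨rfl, ?_, ?_⟩ <;> rfl
  -- the target set and function downstairs
  set lam : ℝ → ℝ := fun u => 2*n*u + n^2 with hlam
  set SG : Set (ℝ × (Fin 2 → ℝ)) := {y | y.1^2 + (y.2 0)^2 + (y.2 1)^2 < R^2 ∧
    R^2 < y.1^2 + (y.2 0)^2 + (y.2 1)^2 + lam y.1} with hSG
  have hw0 : Measurable fun y : ℝ × (Fin 2 → ℝ) => y.1^2 + (y.2 0)^2 + (y.2 1)^2 :=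
    ((measurable_fst.pow_const 2).add
      (((measurable_pi_apply (0 : Fin 2)).comp (measurable_snd (α := ℝ) (β := Fin 2 → ℝ))).pow_const 2)).add
      (((measurable_pi_apply (1 : Fin 2)).comp (measurable_snd (α := ℝ) (β := Fin 2 → ℝ))).pow_const 2)
  have hlamm : Measurable fun y : ℝ × (Fin 2 → ℝ) => lam y.1 := by
    simp only [hlam]
    exact (measurable_fst.const_mul (2*n)).add measurable_const
  have hSGm : MeasurableSet SG := by
    apply MeasurableSet.inter
    · exact measurableSet_lt hw0 measurable_const
    · exact measurableSet_lt measurable_const (hw0.add hlamm)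
  set G : ℝ × (Fin 2 → ℝ) → ENNReal := SG.indicator (fun y => g (lam y.1)) with hG
  have hGm : Measurable G := (hg.comp hlamm).indicator hSGm
  -- the original set
  set S : Set E3 := {r | ‖r‖ < R ∧ R < ‖r + q‖} with hSdef
  have hSm : MeasurableSet S := by
    apply MeasurableSet.inter
    · exact measurableSet_lt measurable_norm measurable_const
    · exact measurableSet_lt measurable_const
        ((measurable_id.add_const q).norm)
  -- identify LHS with ∫⁻ r, G (Ψ r)
  have hLHS : ∫⁻ r in S, g (‖r + q‖^2 - ‖r‖^2) = ∫⁻ r, G (T (φ (bm r))) := by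
    rw [← lintegral_indicator hSm]
    congr 1
    funext r
    obtain ⟨h0, h1, h2⟩ := hcomp r
    have hmem : r ∈ S ↔ (T (φ (bm r))) ∈ SG := by
      simp only [hSdef, Set.mem_setOf_eq, hSG, h0, h1, h2]
      have e1 : ‖r‖ < R ↔ (b.repr r 0)^2 + (b.repr r 1)^2 + (b.repr r 2)^2 < R^2 := by
        rw [← hnorm_sq r]
        constructor <;> intro h <;> nlinarith [norm_nonneg r]
      have e2 : R < ‖r + q‖ ↔
          R^2 < (b.repr r 0)^2 + (b.repr r 1)^2 + (b.repr r 2)^2 + lam (b.repr r 0) := by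
        rw [← hnorm_sq r, hlam, ← hkey r]
        constructor <;> intro h <;> nlinarith [norm_nonneg (r + q)]
      rw [← e1, ← e2]
    have hval : ‖r + q‖^2 - ‖r‖^2 = lam (b.repr r 0) := by
      rw [hkey r, hlam]; ring
    by_cases hr : r ∈ S
    · rw [Set.indicator_of_mem hr, hG, Set.indicator_of_mem (hmem.mp hr), hval, h0]
    · rw [Set.indicator_of_notMem hr, hG,
        Set.indicator_of_notMem (fun hc => hr (hmem.mpr hc))]
  rw [hLHS]
  have : ∫⁻ (r : E3), G (T (φ (bm r))) = ∫⁻ y, G y := by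
    have := hΨ.lintegral_comp hGm
    simpa [Function.comp] using this
  rw [this]
  -- Fubini
  rw [Measure.volume_eq_prod, lintegral_prod G hGm.aemeasurable]
  -- slice bound
  have hslice : ∀ u : ℝ, ∫⁻ w, G (u, w) ≤
      (Set.Ioo (-(n/2)) R).indicator
        (fun u => ENNReal.ofReal π * (g (lam u) * ENNReal.ofReal (lam u))) u := by
    intro u
    set A : Set (Fin 2 → ℝ) :=
      {w | (R^2 - u^2 - lam u) < w 0^2 + w 1^2 ∧ w 0^2 + w 1^2 < (R^2 - u^2)} with hA
    have hGA : ∀ w, G (u, w) = A.indicator (fun _ => g (lam u)) w := by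
      intro w
      have hmem : (u, w) ∈ SG ↔ w ∈ A := by
        simp only [hSG, Set.mem_setOf_eq, hA]
        constructor
        · rintro ⟨x1, x2⟩; constructor <;> linarith
        · rintro ⟨x1, x2⟩; constructor <;> linarith
      by_cases hw : w ∈ A
      · rw [hG, Set.indicator_of_mem (hmem.mpr hw), Set.indicator_of_mem hw]
      · rw [hG, Set.indicator_of_notMem (fun hc => hw (hmem.mp hc)),
          Set.indicator_of_notMem hw]
    have hAm : MeasurableSet A := by
      apply MeasurableSet.inter
      · exact measurableSet_lt measurable_const
          (((measurable_pi_apply 0).pow_const 2).add ((measurable_pi_apply 1).pow_const 2))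
      · exact measurableSet_lt
          (((measurable_pi_apply 0).pow_const 2).add ((measurable_pi_apply 1).pow_const 2))
          measurable_const
    have hInt : ∫⁻ w, G (u, w) = g (lam u) * volume A := by
      simp_rw [hGA]
      rw [lintegral_indicator hAm, setLIntegral_const]
    rw [hInt]
    by_cases hu : u ∈ Set.Ioo (-(n/2)) R
    · rw [Set.indicator_of_mem hu]
      have := vol_annulus (R^2 - u^2 - lam u) (R^2 - u^2)
      have heq : R^2 - u^2 - (R^2 - u^2 - lam u) = lam u := by ring
      rw [heq] at this
      calc g (lam u) * volume A ≤ g (lam u) * (ENNReal.ofReal π * ENNReal.ofReal (lam u)) := by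
            exact mul_le_mul_right this _
        _ = ENNReal.ofReal π * (g (lam u) * ENNReal.ofReal (lam u)) := by ring
    · rw [Set.indicator_of_notMem hu]
      have hA0 : A = ∅ := by
        ext w
        simp only [hA, Set.mem_setOf_eq, Set.mem_empty_iff_false, iff_false]
        rintro ⟨x1, x2⟩
        simp only [Set.mem_Ioo, not_and_or, not_lt] at hu
        rcases hu with hu | hu
        · have hlam0 : lam u ≤ 0 := by
            show 2*n*u + n^2 ≤ 0
            have h2 := mul_le_mul_of_nonneg_left hu (by positivity : (0:ℝ) ≤ 2*n)
            nlinarith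
          nlinarith [sq_nonneg (w 0), sq_nonneg (w 1)]
        · nlinarith [sq_nonneg (w 0), sq_nonneg (w 1), hR]
      rw [hA0]
      simp
  calc ∫⁻ u, ∫⁻ w, G (u, w) ≤ ∫⁻ u, (Set.Ioo (-(n/2)) R).indicator
        (fun u => ENNReal.ofReal π * (g (lam u) * ENNReal.ofReal (lam u))) u :=
        lintegral_mono hslice
    _ = ∫⁻ u in Set.Ioo (-(n/2)) R,
        ENNReal.ofReal π * (g (lam u) * ENNReal.ofReal (lam u)) := by
        rw [lintegral_indicator measurableSet_Ioo]
    _ = ENNReal.ofReal π * ∫⁻ u in Set.Ioo (-(n/2)) R,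
        g (lam u) * ENNReal.ofReal (lam u) :=
        lintegral_const_mul' _ _ ENNReal.ofReal_ne_top

lemma lemA (q : E3) (hq : q ≠ 0) (R : ℝ) (hR : 0 < R) :
    ∫⁻ r in {r : E3 | ‖r‖ < R ∧ R < ‖r + q‖},
        ENNReal.ofReal (1 / ((‖r + q‖^2 - ‖r‖^2) * Real.sqrt (‖r + q‖^2 - ‖r‖^2))) ≤
      ENNReal.ofReal π *
        ENNReal.ofReal ((2*‖q‖*R + ‖q‖^2) ^ ((1:ℝ)/2) / ((1/2) * (2*‖q‖))) := by
  have hq0 : 0 < ‖q‖ := norm_pos_iff.mpr hq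
  have hg : Measurable (fun t : ℝ => ENNReal.ofReal (1 / (t * Real.sqrt t))) := by
    apply Measurable.ennreal_ofReal
    exact (measurable_const.div (measurable_id.mul Real.continuous_sqrt.measurable))
  refine le_trans (core q hq R hR _ hg) ?_
  have hcong : ∫⁻ u in Set.Ioo (-(‖q‖/2)) R,
      (fun t : ℝ => ENNReal.ofReal (1 / (t * Real.sqrt t))) (2*‖q‖*u + ‖q‖^2)
        * ENNReal.ofReal (2*‖q‖*u + ‖q‖^2)
      = ∫⁻ u in Set.Ioo (-(‖q‖/2)) R, ENNReal.ofReal ((2*‖q‖*u + ‖q‖^2) ^ (-(1:ℝ)/2)) := by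
    apply setLIntegral_congr_fun measurableSet_Ioo
    intro u hu
    set t := 2*‖q‖*u + ‖q‖^2 with hts
    have ht : 0 < t := by
      have := hu.1
      show 0 < 2*‖q‖*u + ‖q‖^2
      nlinarith [hu.1]
    have hst : 0 < Real.sqrt t := Real.sqrt_pos.mpr ht
    show ENNReal.ofReal (1 / (t * Real.sqrt t)) * ENNReal.ofReal t = ENNReal.ofReal (t ^ (-(1:ℝ)/2))
    rw [← ENNReal.ofReal_mul (by positivity)]
    congr 1
    rw [show (-(1:ℝ)/2) = -(1/2 : ℝ) by norm_num, Real.rpow_neg ht.le, ← Real.sqrt_eq_rpow]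
    field_simp
  rw [hcong, oneD ‖q‖ R (-(1:ℝ)/2) hq0 (by linarith) (by norm_num)]
  rw [show (-(1:ℝ)/2 + 1) = (1:ℝ)/2 by norm_num]

lemma lemB (q : E3) (hq : q ≠ 0) (R : ℝ) (hR : 0 < R) :
    ∫⁻ r in {r : E3 | ‖r‖ < R ∧ R < ‖r + q‖},
        ENNReal.ofReal (1 / Real.sqrt (‖r + q‖^2 - ‖r‖^2)) ≤
      ENNReal.ofReal π *
        ENNReal.ofReal ((2*‖q‖*R + ‖q‖^2) ^ ((3:ℝ)/2) / ((3/2) * (2*‖q‖))) := by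
  have hq0 : 0 < ‖q‖ := norm_pos_iff.mpr hq
  have hg : Measurable (fun t : ℝ => ENNReal.ofReal (1 / Real.sqrt t)) := by
    apply Measurable.ennreal_ofReal
    exact measurable_const.div Real.continuous_sqrt.measurable
  refine le_trans (core q hq R hR _ hg) ?_
  have hcong : ∫⁻ u in Set.Ioo (-(‖q‖/2)) R,
      (fun t : ℝ => ENNReal.ofReal (1 / Real.sqrt t)) (2*‖q‖*u + ‖q‖^2)
        * ENNReal.ofReal (2*‖q‖*u + ‖q‖^2)
      = ∫⁻ u in Set.Ioo (-(‖q‖/2)) R, ENNReal.ofReal ((2*‖q‖*u + ‖q‖^2) ^ ((1:ℝ)/2)) := by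
    apply setLIntegral_congr_fun measurableSet_Ioo
    intro u hu
    set t := 2*‖q‖*u + ‖q‖^2 with hts
    have ht : 0 < t := by
      show 0 < 2*‖q‖*u + ‖q‖^2
      nlinarith [hu.1]
    have hst : 0 < Real.sqrt t := Real.sqrt_pos.mpr ht
    show ENNReal.ofReal (1 / Real.sqrt t) * ENNReal.ofReal t = ENNReal.ofReal (t ^ ((1:ℝ)/2))
    rw [← ENNReal.ofReal_mul (by positivity)]
    congr 1
    rw [← Real.sqrt_eq_rpow]
    field_simp
    exact (Real.sq_sqrt ht.le).symm
  rw [hcong, oneD ‖q‖ R ((1:ℝ)/2) hq0 (by linarith) (by norm_num)]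
  rw [show ((1:ℝ)/2 + 1) = (3:ℝ)/2 by norm_num]

/-- Uniform boundedness (in `0 < x ≤ 1`) of the singular integral
`∫∫∫ (λ_{r,p} + λ_{r',-p})⁻² dp dr dr'` over the region
`|r| < 1 < |r+p|`, `|r'| < x < |r'-p|`. -/
theorem singular_integral_uniform_bound :
    ∃ C : ENNReal, C ≠ ⊤ ∧ ∀ x : ℝ, 0 < x → x ≤ 1 →
      (∫⁻ p : EuclideanSpace ℝ (Fin 3),
        ∫⁻ r in {r : EuclideanSpace ℝ (Fin 3) | ‖r‖ < 1 ∧ 1 < ‖r + p‖},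
          ∫⁻ r' in {r' : EuclideanSpace ℝ (Fin 3) | ‖r'‖ < x ∧ x < ‖r' - p‖},
            ENNReal.ofReal
              (1 / (‖r + p‖ ^ 2 - ‖r‖ ^ 2 + ‖r' - p‖ ^ 2 - ‖r'‖ ^ 2) ^ 2)) ≤ C := by
  classical
  set V : ENNReal := volume (Metric.ball (0 : E3) 1) with hV
  set J : ENNReal := ∫⁻ p : E3, ENNReal.ofReal ((1 + ‖p‖) ^ (-(4:ℝ))) with hJ
  have hJfin : J ≠ ⊤ := by
    rw [hJ]
    refine (finite_integral_one_add_norm ?_).ne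
    simp [finrank_euclideanSpace]
    norm_num
  have hVfin : V ≠ ⊤ := measure_ball_lt_top.ne
  refine ⟨ENNReal.ofReal (25*π^2/3) * volume (Metric.ball (0 : E3) 3)
      + V^2 * ENNReal.ofReal (9*(4/3:ℝ)^4) * J, ?_, ?_⟩
  · apply ENNReal.add_ne_top.mpr
    constructor
    · exact ENNReal.mul_ne_top ENNReal.ofReal_ne_top measure_ball_lt_top.ne
    · exact ENNReal.mul_ne_top (ENNReal.mul_ne_top (ENNReal.pow_ne_top hVfin)
        ENNReal.ofReal_ne_top) hJfin
  intro x hx0 hx1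
  -- notation
  set F : E3 → ENNReal := fun p =>
    ∫⁻ r in {r : E3 | ‖r‖ < 1 ∧ 1 < ‖r + p‖},
      ∫⁻ r' in {r' : E3 | ‖r'‖ < x ∧ x < ‖r' - p‖},
        ENNReal.ofReal
          (1 / (‖r + p‖ ^ 2 - ‖r‖ ^ 2 + ‖r' - p‖ ^ 2 - ‖r'‖ ^ 2) ^ 2) with hF
  show ∫⁻ p : E3, F p ≤ _
  rw [← lintegral_add_compl F (measurableSet_ball (x := (0:E3)) (ε := 3))]
  have hmeas_r' : ∀ p : E3, MeasurableSet {r' : E3 | ‖r'‖ < x ∧ x < ‖r' - p‖} := by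
    intro p
    exact (measurableSet_lt measurable_norm measurable_const).inter
      (measurableSet_lt measurable_const (measurable_id.sub_const p).norm)
  have hmeas_r : ∀ p : E3, MeasurableSet {r : E3 | ‖r‖ < 1 ∧ 1 < ‖r + p‖} := by
    intro p
    exact (measurableSet_lt measurable_norm measurable_const).inter
      (measurableSet_lt measurable_const (measurable_id.add_const p).norm)
  gcongr
  · -- small p piece
    have hptwise : ∀ p ∈ Metric.ball (0 : E3) 3, F p ≤ ENNReal.ofReal (25*π^2/3) := by
      intro p hp
      rw [Metric.mem_ball, dist_zero_right] at hp
      by_cases hp0 : p = 0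
      · have : {r : E3 | ‖r‖ < 1 ∧ 1 < ‖r + p‖} = ∅ := by
          ext r
          simp only [hp0, add_zero, Set.mem_setOf_eq, Set.mem_empty_iff_false, iff_false]
          rintro ⟨h1, h2⟩; linarith
        rw [hF]; simp only [this, Measure.restrict_empty, lintegral_zero_measure]
        positivity
      -- p ≠ 0
      set q : ℝ := ‖p‖ with hq
      have hq0 : 0 < q := norm_pos_iff.mpr hp0
      -- inner bound
      have hinner : ∀ r : E3, r ∈ {r : E3 | ‖r‖ < 1 ∧ 1 < ‖r + p‖} →
          (∫⁻ r' in {r' : E3 | ‖r'‖ < x ∧ x < ‖r' - p‖},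
            ENNReal.ofReal
              (1 / (‖r + p‖ ^ 2 - ‖r‖ ^ 2 + ‖r' - p‖ ^ 2 - ‖r'‖ ^ 2) ^ 2)) ≤
          ENNReal.ofReal (1 / ((‖r + p‖^2 - ‖r‖^2) * Real.sqrt (‖r + p‖^2 - ‖r‖^2))) *
            (ENNReal.ofReal π *
              ENNReal.ofReal ((2*q*x + q^2) ^ ((3:ℝ)/2) / ((3/2) * (2*q)))) := by
        intro r hr
        obtain ⟨hr1, hr2⟩ := hr
        have hlam : 0 < ‖r + p‖^2 - ‖r‖^2 := by nlinarith [norm_nonneg r, norm_nonneg (r+p)]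
        calc ∫⁻ r' in {r' : E3 | ‖r'‖ < x ∧ x < ‖r' - p‖},
              ENNReal.ofReal
                (1 / (‖r + p‖ ^ 2 - ‖r‖ ^ 2 + ‖r' - p‖ ^ 2 - ‖r'‖ ^ 2) ^ 2)
            ≤ ∫⁻ r' in {r' : E3 | ‖r'‖ < x ∧ x < ‖r' - p‖},
              ENNReal.ofReal (1 / ((‖r + p‖^2 - ‖r‖^2) * Real.sqrt (‖r + p‖^2 - ‖r‖^2))) *
                ENNReal.ofReal (1 / Real.sqrt (‖r' - p‖^2 - ‖r'‖^2)) := by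
              apply setLIntegral_mono' (hmeas_r' p)
              intro r' hr'
              obtain ⟨hr'1, hr'2⟩ := hr'
              have hlam' : 0 < ‖r' - p‖^2 - ‖r'‖^2 := by
                nlinarith [norm_nonneg r', norm_nonneg (r'-p)]
              rw [← ENNReal.ofReal_mul (by positivity)]
              apply ENNReal.ofReal_le_ofReal
              set a := ‖r + p‖^2 - ‖r‖^2 with ha
              set b := ‖r' - p‖^2 - ‖r'‖^2 with hb
              have hD : ‖r + p‖ ^ 2 - ‖r‖ ^ 2 + ‖r' - p‖ ^ 2 - ‖r'‖ ^ 2 = a + b := by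
                rw [ha, hb]; ring
              rw [hD]
              have hsa : Real.sqrt a ^ 2 = a := Real.sq_sqrt hlam.le
              have hsb : Real.sqrt b ^ 2 = b := Real.sq_sqrt hlam'.le
              have h1 : 0 < a * Real.sqrt a * Real.sqrt b := by positivity
              have h2 : a * Real.sqrt a * Real.sqrt b ≤ (a+b)^2 := by
                nlinarith [Real.sqrt_nonneg a, Real.sqrt_nonneg b,
                  sq_nonneg (Real.sqrt a - Real.sqrt b), sq_nonneg (Real.sqrt a + Real.sqrt b),
                  sq_nonneg (Real.sqrt a * Real.sqrt b)]
              calc 1 / (a+b)^2 ≤ 1 / (a * Real.sqrt a * Real.sqrt b) :=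
                    one_div_le_one_div_of_le h1 h2
                _ = 1 / (a * Real.sqrt a) * (1 / Real.sqrt b) := by rw [one_div, one_div, one_div, mul_inv]
          _ = ENNReal.ofReal (1 / ((‖r + p‖^2 - ‖r‖^2) * Real.sqrt (‖r + p‖^2 - ‖r‖^2))) *
              ∫⁻ r' in {r' : E3 | ‖r'‖ < x ∧ x < ‖r' - p‖},
                ENNReal.ofReal (1 / Real.sqrt (‖r' - p‖^2 - ‖r'‖^2)) :=
              lintegral_const_mul' _ _ ENNReal.ofReal_ne_top
          _ ≤ _ := by
              apply mul_le_mul_right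
              have hB := lemB (-p) (neg_ne_zero.mpr hp0) x hx0
              rw [norm_neg] at hB
              simp_rw [← sub_eq_add_neg] at hB
              exact hB
      calc F p ≤ ∫⁻ r in {r : E3 | ‖r‖ < 1 ∧ 1 < ‖r + p‖},
            ENNReal.ofReal (1 / ((‖r + p‖^2 - ‖r‖^2) * Real.sqrt (‖r + p‖^2 - ‖r‖^2))) *
              (ENNReal.ofReal π *
                ENNReal.ofReal ((2*q*x + q^2) ^ ((3:ℝ)/2) / ((3/2) * (2*q)))) :=
            setLIntegral_mono' (hmeas_r p) hinner
        _ = (ENNReal.ofReal π *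
              ENNReal.ofReal ((2*q*x + q^2) ^ ((3:ℝ)/2) / ((3/2) * (2*q)))) *
            ∫⁻ r in {r : E3 | ‖r‖ < 1 ∧ 1 < ‖r + p‖},
              ENNReal.ofReal (1 / ((‖r + p‖^2 - ‖r‖^2) * Real.sqrt (‖r + p‖^2 - ‖r‖^2))) := by
            simp_rw [mul_comm]
            exact lintegral_const_mul' _ _ (ENNReal.mul_ne_top ENNReal.ofReal_ne_top
              ENNReal.ofReal_ne_top)
        _ ≤ (ENNReal.ofReal π *
              ENNReal.ofReal ((2*q*x + q^2) ^ ((3:ℝ)/2) / ((3/2) * (2*q)))) *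
            (ENNReal.ofReal π *
              ENNReal.ofReal ((2*q*1 + q^2) ^ ((1:ℝ)/2) / ((1/2) * (2*q)))) :=
            mul_le_mul_right (lemA p hp0 1 one_pos) _
        _ ≤ ENNReal.ofReal (25*π^2/3) := by
            rw [← ENNReal.ofReal_mul Real.pi_nonneg, ← ENNReal.ofReal_mul Real.pi_nonneg,
              ← ENNReal.ofReal_mul (by positivity)]
            apply ENNReal.ofReal_le_ofReal
            -- real arithmetic
            set s := 2*q*x + q^2 with hs
            set t := 2*q*1 + q^2 with ht
            have hs0 : 0 < s := by rw [hs]; nlinarith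
            have ht0 : 0 < t := by rw [ht]; nlinarith
            have hst : s ≤ t := by rw [hs, ht]; nlinarith
            have h1 : s ^ ((3:ℝ)/2) ≤ t ^ ((3:ℝ)/2) :=
              Real.rpow_le_rpow hs0.le hst (by norm_num)
            have h2 : t ^ ((3:ℝ)/2) * t ^ ((1:ℝ)/2) = t^2 := by
              rw [← Real.rpow_add ht0]
              norm_num
            have ht5 : t ≤ 5*q := by rw [ht]; nlinarith
            have h3 : t^2 ≤ 25*q^2 := by nlinarith
            have hq2 : 0 < q^2 := by positivity
            have key : s ^ ((3:ℝ)/2) / ((3/2) * (2*q)) * (t ^ ((1:ℝ)/2) / ((1/2) * (2*q)))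
                ≤ 25/3 := by
              have e1 : s ^ ((3:ℝ)/2) / ((3/2) * (2*q)) * (t ^ ((1:ℝ)/2) / ((1/2) * (2*q)))
                  = s ^ ((3:ℝ)/2) * t ^ ((1:ℝ)/2) / (3 * q^2) := by
                field_simp
              rw [e1]
              rw [div_le_div_iff₀ (by positivity) (by norm_num : (0:ℝ) < 3)]
              have : s ^ ((3:ℝ)/2) * t ^ ((1:ℝ)/2) ≤ t^2 := by
                calc s ^ ((3:ℝ)/2) * t ^ ((1:ℝ)/2) ≤ t ^ ((3:ℝ)/2) * t ^ ((1:ℝ)/2) := by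
                      apply mul_le_mul_of_nonneg_right h1 (Real.rpow_nonneg ht0.le _)
                  _ = t^2 := h2
              nlinarith
            calc π * (s ^ ((3:ℝ)/2) / ((3/2) * (2*q))) *
                  (π * (t ^ ((1:ℝ)/2) / ((1/2) * (2*q))))
                = π^2 * (s ^ ((3:ℝ)/2) / ((3/2) * (2*q)) * (t ^ ((1:ℝ)/2) / ((1/2) * (2*q)))) := by
                  ring
              _ ≤ π^2 * (25/3) := by nlinarith [Real.pi_nonneg, sq_nonneg π,
                  mul_le_mul_of_nonneg_left key (sq_nonneg π)]
              _ = 25*π^2/3 := by ring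
    calc ∫⁻ p in Metric.ball (0 : E3) 3, F p
        ≤ ∫⁻ _ in Metric.ball (0 : E3) 3, ENNReal.ofReal (25*π^2/3) :=
          setLIntegral_mono' measurableSet_ball hptwise
      _ = ENNReal.ofReal (25*π^2/3) * volume (Metric.ball (0 : E3) 3) :=
          setLIntegral_const _ _
  · -- large p piece
    have hptwise : ∀ p ∈ (Metric.ball (0 : E3) 3)ᶜ,
        F p ≤ V^2 * ENNReal.ofReal (9*(4/3:ℝ)^4) * ENNReal.ofReal ((1 + ‖p‖) ^ (-(4:ℝ))) := by
      intro p hp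
      rw [Set.mem_compl_iff, Metric.mem_ball, dist_zero_right, not_lt] at hp
      set q : ℝ := ‖p‖ with hq
      have hq3 : 3 ≤ q := hp
      have hq0 : 0 < q := by linarith
      have hpoint : ∀ r ∈ {r : E3 | ‖r‖ < 1 ∧ 1 < ‖r + p‖},
          ∀ r' ∈ {r' : E3 | ‖r'‖ < x ∧ x < ‖r' - p‖},
          ENNReal.ofReal (1 / (‖r + p‖ ^ 2 - ‖r‖ ^ 2 + ‖r' - p‖ ^ 2 - ‖r'‖ ^ 2) ^ 2) ≤
          ENNReal.ofReal (9*(4/3:ℝ)^4) * ENNReal.ofReal ((1 + q) ^ (-(4:ℝ))) := by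
        intro r hr r' hr'
        obtain ⟨hr1, hr2⟩ := hr
        obtain ⟨hr'1, hr'2⟩ := hr'
        have hlam : 0 < ‖r + p‖^2 - ‖r‖^2 := by nlinarith [norm_nonneg r, norm_nonneg (r+p)]
        have hr'1' : ‖r'‖ < 1 := lt_of_lt_of_le hr'1 hx1
        have htri : q - ‖r'‖ ≤ ‖r' - p‖ := by
          have h1 : ‖p‖ - ‖r'‖ ≤ ‖p - r'‖ := norm_sub_norm_le p r'
          rw [norm_sub_rev] at h1
          exact h1
        have hlam' : q^2 - 2*q ≤ ‖r' - p‖^2 - ‖r'‖^2 := by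
          have h0 : 0 ≤ q - ‖r'‖ := by linarith
          have h2 : (q - ‖r'‖)^2 ≤ ‖r' - p‖^2 := by nlinarith [norm_nonneg (r' - p)]
          nlinarith [norm_nonneg r']
        have hDlow : q^2/3 ≤ ‖r + p‖ ^ 2 - ‖r‖ ^ 2 + ‖r' - p‖ ^ 2 - ‖r'‖ ^ 2 := by
          nlinarith
        rw [← ENNReal.ofReal_mul (by positivity)]
        apply ENNReal.ofReal_le_ofReal
        have hq4 : (0:ℝ) < q^2/3 := by positivity
        have hD2 : (q^2/3)^2 ≤ (‖r + p‖ ^ 2 - ‖r‖ ^ 2 + ‖r' - p‖ ^ 2 - ‖r'‖ ^ 2)^2 := by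
          nlinarith
        have step1 : 1 / (‖r + p‖ ^ 2 - ‖r‖ ^ 2 + ‖r' - p‖ ^ 2 - ‖r'‖ ^ 2) ^ 2
            ≤ 1 / (q^2/3)^2 := one_div_le_one_div_of_le (by positivity) hD2
        have hrpow : (1 + q) ^ (-(4:ℝ)) = 1 / (1+q)^4 := by
          rw [Real.rpow_neg (by linarith), one_div]
          congr 1
          rw [show ((4:ℝ)) = ((4:ℕ):ℝ) by norm_num, Real.rpow_natCast]
        rw [hrpow]
        have h14 : (1 + q) ≤ (4/3)*q := by linarith
        have h14' : (1+q)^4 ≤ ((4/3)*q)^4 := by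
          apply pow_le_pow_left₀ (by linarith) h14
        have hfin : 1 / (q^2/3)^2 ≤ 9*(4/3:ℝ)^4 * (1 / (1+q)^4) := by
          have e1 : 1/(q^2/3)^2 = 9/q^4 := by
            field_simp
            ring
          rw [e1, mul_one_div, div_le_div_iff₀ (by positivity) (by positivity)]
          rw [mul_pow] at h14'
          nlinarith [pow_pos hq0 4]
        linarith
      have hsub' : {r' : E3 | ‖r'‖ < x ∧ x < ‖r' - p‖} ⊆ Metric.ball (0 : E3) 1 := by
        intro r' hr'
        rw [Metric.mem_ball, dist_zero_right]
        exact lt_of_lt_of_le hr'.1 hx1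
      have hsub : {r : E3 | ‖r‖ < 1 ∧ 1 < ‖r + p‖} ⊆ Metric.ball (0 : E3) 1 := by
        intro r hr
        rw [Metric.mem_ball, dist_zero_right]
        exact hr.1
      set c : ENNReal := ENNReal.ofReal (9*(4/3:ℝ)^4) * ENNReal.ofReal ((1 + q) ^ (-(4:ℝ)))
        with hc
      calc F p ≤ ∫⁻ r in {r : E3 | ‖r‖ < 1 ∧ 1 < ‖r + p‖}, c * V := by
            apply setLIntegral_mono' (hmeas_r p)
            intro r hr
            calc ∫⁻ r' in {r' : E3 | ‖r'‖ < x ∧ x < ‖r' - p‖},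
                  ENNReal.ofReal
                    (1 / (‖r + p‖ ^ 2 - ‖r‖ ^ 2 + ‖r' - p‖ ^ 2 - ‖r'‖ ^ 2) ^ 2)
                ≤ ∫⁻ _ in {r' : E3 | ‖r'‖ < x ∧ x < ‖r' - p‖}, c :=
                  setLIntegral_mono' (hmeas_r' p) (hpoint r hr)
              _ = c * volume {r' : E3 | ‖r'‖ < x ∧ x < ‖r' - p‖} := setLIntegral_const _ _
              _ ≤ c * V := by
                  apply mul_le_mul_right
                  exact measure_mono hsub'
        _ = (c * V) * volume {r : E3 | ‖r‖ < 1 ∧ 1 < ‖r + p‖} := setLIntegral_const _ _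
        _ ≤ (c * V) * V := by
            apply mul_le_mul_right
            exact measure_mono hsub
        _ = V^2 * ENNReal.ofReal (9*(4/3:ℝ)^4) * ENNReal.ofReal ((1 + q) ^ (-(4:ℝ))) := by
            rw [hc]; ring
    calc ∫⁻ p in (Metric.ball (0 : E3) 3)ᶜ, F p
        ≤ ∫⁻ p in (Metric.ball (0 : E3) 3)ᶜ,
            V^2 * ENNReal.ofReal (9*(4/3:ℝ)^4) * ENNReal.ofReal ((1 + ‖p‖) ^ (-(4:ℝ))) :=
          setLIntegral_mono' measurableSet_ball.compl hptwise
      _ ≤ ∫⁻ p : E3,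
            V^2 * ENNReal.ofReal (9*(4/3:ℝ)^4) * ENNReal.ofReal ((1 + ‖p‖) ^ (-(4:ℝ))) :=
          setLIntegral_le_lintegral _ _
      _ = V^2 * ENNReal.ofReal (9*(4/3:ℝ)^4) * J := by
          rw [hJ]
          exact lintegral_const_mul' _ _ (ENNReal.mul_ne_top
            (ENNReal.pow_ne_top hVfin) ENNReal.ofReal_ne_top)
end

section
/- For every x > 0 and y > 0, the three-dimensional integral over the ball |r'| < x of y/(y² + x²(x − |r'|)²) dr' is at most 2π² x. -/
open MeasureTheory Set Real

lemma gamma_five_half : Real.Gamma (5 / 2) = 3 / 4 * Real.sqrt Real.pi := by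
  have h1 : Real.Gamma (5 / 2) = (3 / 2) * Real.Gamma (3 / 2) := by
    have := Real.Gamma_add_one (s := (3 / 2 : ℝ)) (by norm_num)
    norm_num at this ⊢
    linarith [this]
  have h2 : Real.Gamma (3 / 2) = (1 / 2) * Real.Gamma (1 / 2) := by
    have := Real.Gamma_add_one (s := (1 / 2 : ℝ)) (by norm_num)
    norm_num at this ⊢
    linarith [this]
  rw [h1, h2, Real.Gamma_one_half_eq]
  ring

lemma one_dim_integral (x y : ℝ) (hx : 0 < x) (hy : 0 < y) :
    ∫ s in (0:ℝ)..x, y / (y ^ 2 + x ^ 2 * (x - s) ^ 2)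
      = (1 / x) * Real.arctan (x ^ 2 / y) := by
  have key : ∀ s ∈ Set.uIcc (0:ℝ) x,
      HasDerivAt (fun s => (1 / x) * Real.arctan (x * (s - x) / y))
        (y / (y ^ 2 + x ^ 2 * (x - s) ^ 2)) s := by
    intro s _
    have h1 : HasDerivAt (fun s : ℝ => x * (s - x) / y) (x / y) s := by
      have : HasDerivAt (fun s : ℝ => x * (s - x) / y) (x * 1 / y) s :=
        (((hasDerivAt_id s).sub_const x).const_mul x).div_const y
      simpa using this
    have h2 := (Real.hasDerivAt_arctan (x * (s - x) / y)).comp s h1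
    have h3 := h2.const_mul (1 / x)
    refine h3.congr_deriv ?_
    have hd : (0:ℝ) < 1 + (x * (s - x) / y) ^ 2 := by positivity
    have : y ^ 2 + x ^ 2 * (x - s) ^ 2 ≠ 0 := by positivity
    field_simp
    ring_nf
  rw [intervalIntegral.integral_eq_sub_of_hasDerivAt key
    (by
      apply Continuous.intervalIntegrable
      have hden : ∀ s : ℝ, y ^ 2 + x ^ 2 * (x - s) ^ 2 ≠ 0 := by
        intro s; positivity
      exact continuous_const.div (by continuity) hden)]
  have : x * (x - x) / y = 0 := by ring
  rw [this]
  have : x * ((0:ℝ) - x) / y = -(x ^ 2 / y) := by ring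
  rw [this, Real.arctan_zero, Real.arctan_neg]
  ring

/-- For all `x, y > 0`, `∫_{|r'| < x} y / (y² + x²(x − |r'|)²) dr' ≤ 2π²x`. -/
theorem ball_integral_bound (x y : ℝ) (hx : 0 < x) (hy : 0 < y) :
    (∫ r' in Metric.ball (0 : EuclideanSpace ℝ (Fin 3)) x,
        y / (y ^ 2 + x ^ 2 * (x - ‖r'‖) ^ 2)) ≤ 2 * Real.pi ^ 2 * x := by
  set g : ℝ → ℝ := fun s => y / (y ^ 2 + x ^ 2 * (x - s) ^ 2) with hg
  have hgc : Continuous g := by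
    apply continuous_const.div (by continuity)
    intro s; positivity
  set f : ℝ → ℝ := Set.indicator (Set.Iio x) g with hf
  have h1 : (∫ r' in Metric.ball (0 : EuclideanSpace ℝ (Fin 3)) x, g ‖r'‖)
      = ∫ r' : EuclideanSpace ℝ (Fin 3), f ‖r'‖ := by
    rw [← integral_indicator measurableSet_ball]
    congr 1
    ext r'
    by_cases h : ‖r'‖ < x
    · rw [Set.indicator_of_mem (by simpa [Metric.mem_ball, dist_zero_right] using h),
        hf, Set.indicator_of_mem (by simpa using h)]
    · rw [Set.indicator_of_notMem (by simpa [Metric.mem_ball, dist_zero_right] using h),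
        hf, Set.indicator_of_notMem (by simpa using h)]
  rw [show (∫ r' in Metric.ball (0 : EuclideanSpace ℝ (Fin 3)) x,
        y / (y ^ 2 + x ^ 2 * (x - ‖r'‖) ^ 2))
      = ∫ r' in Metric.ball (0 : EuclideanSpace ℝ (Fin 3)) x, g ‖r'‖ from rfl, h1,
    MeasureTheory.integral_fun_norm_addHaar volume f]
  have hdim : Module.finrank ℝ (EuclideanSpace ℝ (Fin 3)) = 3 := by
    simp [finrank_euclideanSpace]
  rw [hdim]
  have hvol : (volume (Metric.ball (0 : EuclideanSpace ℝ (Fin 3)) 1)).toReal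
      = 4 / 3 * Real.pi := by
    rw [EuclideanSpace.volume_ball]
    have hcard : (Fintype.card (Fin 3)) = 3 := by simp
    rw [hcard]
    have h52 : ((3:ℕ) : ℝ) / 2 + 1 = 5 / 2 := by norm_num
    rw [h52, gamma_five_half]
    rw [ENNReal.ofReal_one, one_pow, one_mul, ENNReal.toReal_ofReal (by positivity)]
    have hsp : Real.sqrt Real.pi ^ 3 = Real.pi * Real.sqrt Real.pi := by
      rw [pow_succ, pow_two, Real.mul_self_sqrt Real.pi_pos.le]
    rw [hsp]
    have : Real.sqrt Real.pi ≠ 0 := by positivity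
    field_simp
  rw [measureReal_def, hvol]
  -- now the radial integral
  have hIoo : (∫ s in Set.Ioi (0:ℝ), s ^ (3 - 1) • f s)
      = ∫ s in Set.Ioo (0:ℝ) x, s ^ 2 * g s := by
    have : ∀ s : ℝ, s ^ (3 - 1) • f s
        = Set.indicator (Set.Iio x) (fun s => s ^ 2 * g s) s := by
      intro s
      simp only [hf, Set.indicator_apply, smul_eq_mul]
      split <;> simp
    simp_rw [this]
    rw [setIntegral_indicator measurableSet_Iio, Set.Ioi_inter_Iio]
  rw [hIoo]
  have hintg : IntegrableOn g (Set.Ioo 0 x) volume :=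
    (hgc.integrableOn_Icc (a := 0) (b := x)).mono_set Set.Ioo_subset_Icc_self
  have hint1 : IntegrableOn (fun s => s ^ 2 * g s) (Set.Ioo 0 x) volume :=
    ((continuous_pow 2).mul hgc).integrableOn_Icc.mono_set Set.Ioo_subset_Icc_self
  have hint2 : IntegrableOn (fun s => x ^ 2 * g s) (Set.Ioo 0 x) volume :=
    hintg.const_mul _
  have hmono : (∫ s in Set.Ioo (0:ℝ) x, s ^ 2 * g s)
      ≤ ∫ s in Set.Ioo (0:ℝ) x, x ^ 2 * g s := by
    apply setIntegral_mono_on hint1 hint2 measurableSet_Ioo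
    intro s hs
    have hg0 : 0 ≤ g s := by
      apply div_nonneg hy.le; positivity
    apply mul_le_mul_of_nonneg_right _ hg0
    have := hs.1
    have := hs.2
    nlinarith
  have hval : (∫ s in Set.Ioo (0:ℝ) x, x ^ 2 * g s)
      = x * Real.arctan (x ^ 2 / y) := by
    rw [integral_const_mul, ← integral_Ioc_eq_integral_Ioo,
      ← intervalIntegral.integral_of_le hx.le, one_dim_integral x y hx hy]
    field_simp
  have harctan : Real.arctan (x ^ 2 / y) ≤ Real.pi / 2 := (Real.arctan_lt_pi_div_two _).le
  have hfinal : (∫ s in Set.Ioo (0:ℝ) x, s ^ 2 * g s) ≤ x * (Real.pi / 2) := by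
    calc (∫ s in Set.Ioo (0:ℝ) x, s ^ 2 * g s)
        ≤ x * Real.arctan (x ^ 2 / y) := hval ▸ hmono
      _ ≤ x * (Real.pi / 2) := by
          apply mul_le_mul_of_nonneg_left harctan hx.le
  rw [nsmul_eq_mul, smul_eq_mul]
  calc (3:ℝ) * (4 / 3 * Real.pi * ∫ s in Set.Ioo (0:ℝ) x, s ^ 2 * g s)
      ≤ 3 * (4 / 3 * Real.pi * (x * (Real.pi / 2))) := by
        apply mul_le_mul_of_nonneg_left _ (by norm_num)
        apply mul_le_mul_of_nonneg_left hfinal (by positivity)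
    _ = 2 * Real.pi ^ 2 * x := by ring
end

section
/- Let k_F > 0 and ε > 0, and let R ≥ 2k_F. Then ∫_{k_F ≤ |k| ≤ R} dk · 1/(|k|² − k_F² + ε) ≤ C (R + k_F log(1 + k_F²/ε)) for a universal constant C. -/
open MeasureTheory

open Set Metric in
private lemma fermi_oneD_bound (kF ε R : ℝ) (hkF : 0 < kF) (hε : 0 < ε) (hR : 2 * kF ≤ R) :
    ∫ y in Set.Icc kF R, y ^ 2 * (1 / (y ^ 2 - kF ^ 2 + ε)) ≤
      4 * (R + kF * Real.log (1 + kF ^ 2 / ε)) := by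
  have hkR : kF ≤ R := by linarith
  have hk2 : kF ≤ 2 * kF := by linarith
  set g : ℝ → ℝ := fun y => y ^ 2 * (1 / (y ^ 2 - kF ^ 2 + ε)) with hg
  have hden : ∀ y ∈ Set.Ici kF, y ^ 2 - kF ^ 2 + ε ≠ 0 := by
    intro y hy
    have h2 : kF ^ 2 ≤ y ^ 2 := by nlinarith [hy.out]
    have : 0 < y ^ 2 - kF ^ 2 + ε := by linarith
    exact this.ne'
  have hcont : ContinuousOn g (Set.Ici kF) := by
    exact (continuous_pow 2).continuousOn.mul (continuousOn_const.div
      (((continuous_pow 2).sub continuous_const).add continuous_const).continuousOn hden)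
  have hint1 : IntervalIntegrable g volume kF (2 * kF) := by
    apply (hcont.mono ?_).intervalIntegrable
    rw [Set.uIcc_of_le hk2]; exact Set.Icc_subset_Ici_self
  have hint2 : IntervalIntegrable g volume (2 * kF) R := by
    apply (hcont.mono ?_).intervalIntegrable
    rw [Set.uIcc_of_le hR]
    exact fun y hy => le_trans hk2 hy.1
  set a : ℝ := ε / (2 * kF) with ha
  have hapos : 0 < a := by positivity
  have ha' : 2 * kF * a = ε := by rw [ha]; field_simp [hkF.ne']
  -- majorant on [kF, 2kF]
  have hmajcont : ContinuousOn (fun y : ℝ => 2 * kF * (1 / (y - kF + a)))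
      (Set.Icc kF (2 * kF)) := by
    apply continuousOn_const.mul (continuousOn_const.div
      ((continuous_id.sub continuous_const).add continuous_const).continuousOn ?_)
    intro y hy
    have h2 : kF ≤ y := hy.1
    have : 0 < y - kF + a := by linarith
    exact this.ne'
  have hmajint : IntervalIntegrable (fun y : ℝ => 2 * kF * (1 / (y - kF + a))) volume
      kF (2 * kF) := by
    apply hmajcont.intervalIntegrable_of_Icc hk2
  have h1 : ∫ y in kF..(2 * kF), g y ≤
      ∫ y in kF..(2 * kF), 2 * kF * (1 / (y - kF + a)) := by
    apply intervalIntegral.integral_mono_on hk2 hint1 hmajint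
    intro y hy
    have hy1 : kF ≤ y := hy.1
    have hy2 : y ≤ 2 * kF := hy.2
    have hd1 : 0 < y ^ 2 - kF ^ 2 + ε := by nlinarith
    have hd2 : 0 < y - kF + a := by linarith
    show y ^ 2 * (1 / (y ^ 2 - kF ^ 2 + ε)) ≤ 2 * kF * (1 / (y - kF + a))
    rw [mul_one_div, mul_one_div, div_le_div_iff₀ hd1 hd2]
    nlinarith [mul_nonneg (sub_nonneg.2 hy1) (sub_nonneg.2 hy2),
      mul_nonneg hapos.le (sub_nonneg.2 hy2),
      mul_nonneg (mul_nonneg (sub_nonneg.2 hy1) (sub_nonneg.2 hy2)) hkF.le,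
      mul_nonneg hapos.le (mul_nonneg (sub_nonneg.2 hy2) (by linarith : (0:ℝ) ≤ 2*kF + y))]
  have hcomp : ∫ y in kF..(2 * kF), (1 : ℝ) / (y - kF + a) = Real.log ((kF + a) / a) := by
    have h := intervalIntegral.integral_comp_add_right (a := kF) (b := 2 * kF)
      (fun u : ℝ => 1 / u) (a - kF)
    have e1 : ∀ y : ℝ, y + (a - kF) = y - kF + a := by intro y; ring
    simp only [e1] at h
    rw [h]
    have e2 : kF - kF + a = a := by ring
    have e3 : 2 * kF - kF + a = kF + a := by ring
    rw [e2, e3, integral_one_div]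
    intro hmem
    rw [Set.uIcc_of_le (by linarith)] at hmem
    exact absurd hmem.1 (not_le.2 hapos)
  have hlogeq : (kF + a) / a = 1 + 2 * (kF ^ 2 / ε) := by
    rw [ha]; field_simp; ring
  have hlog2 : Real.log (1 + 2 * (kF ^ 2 / ε)) ≤ 2 * Real.log (1 + kF ^ 2 / ε) := by
    have hx : 0 ≤ kF ^ 2 / ε := by positivity
    rw [show (2 : ℝ) * Real.log (1 + kF ^ 2 / ε) = Real.log ((1 + kF ^ 2 / ε) ^ 2) by
      rw [Real.log_pow]; push_cast; ring]
    apply Real.log_le_log (by linarith)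
    nlinarith
  have hpiece1 : ∫ y in kF..(2 * kF), g y ≤
      2 * kF * (2 * Real.log (1 + kF ^ 2 / ε)) := by
    calc ∫ y in kF..(2 * kF), g y ≤ ∫ y in kF..(2 * kF), 2 * kF * (1 / (y - kF + a)) := h1
      _ = 2 * kF * Real.log ((kF + a) / a) := by
          rw [intervalIntegral.integral_const_mul, hcomp]
      _ = 2 * kF * Real.log (1 + 2 * (kF ^ 2 / ε)) := by rw [hlogeq]
      _ ≤ 2 * kF * (2 * Real.log (1 + kF ^ 2 / ε)) := by
          exact mul_le_mul_of_nonneg_left hlog2 (by linarith : (0:ℝ) ≤ 2 * kF)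
  have hpiece2 : ∫ y in (2 * kF)..R, g y ≤ (4 / 3 : ℝ) * (R - 2 * kF) := by
    calc ∫ y in (2 * kF)..R, g y ≤ ∫ y in (2 * kF)..R, (4 / 3 : ℝ) := by
          apply intervalIntegral.integral_mono_on hR hint2 intervalIntegrable_const
          intro y hy
          have hy1 : 2 * kF ≤ y := hy.1
          have hd1 : 0 < y ^ 2 - kF ^ 2 + ε := by nlinarith
          show y ^ 2 * (1 / (y ^ 2 - kF ^ 2 + ε)) ≤ 4 / 3
          rw [mul_one_div, div_le_div_iff₀ hd1 (by norm_num : (0:ℝ) < 3)]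
          nlinarith
      _ = (4 / 3 : ℝ) * (R - 2 * kF) := by
          rw [intervalIntegral.integral_const, smul_eq_mul, mul_comm]
  have hL : 0 ≤ Real.log (1 + kF ^ 2 / ε) := Real.log_nonneg (by nlinarith [div_nonneg (sq_nonneg kF) hε.le])
  have hsplit : ∫ y in kF..R, g y =
      (∫ y in kF..(2 * kF), g y) + ∫ y in (2 * kF)..R, g y :=
    (intervalIntegral.integral_add_adjacent_intervals hint1 hint2).symm
  have : ∫ y in Set.Icc kF R, g y = ∫ y in kF..R, g y := by
    rw [intervalIntegral.integral_of_le hkR, MeasureTheory.integral_Icc_eq_integral_Ioc]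
  rw [this, hsplit]
  nlinarith [hpiece1, hpiece2]

/-- `∫_{k_F ≤ |k| ≤ R} dk / (|k|² − k_F² + ε) ≤ C (R + k_F log(1 + k_F²/ε))`. -/
theorem fermi_shell_log_bound :
    ∃ C : ℝ, 0 < C ∧ ∀ kF ε R : ℝ, 0 < kF → 0 < ε → 2 * kF ≤ R →
      (∫ k in {k : EuclideanSpace ℝ (Fin 3) | kF ≤ ‖k‖ ∧ ‖k‖ ≤ R},
          1 / (‖k‖ ^ 2 - kF ^ 2 + ε))
        ≤ C * (R + kF * Real.log (1 + kF ^ 2 / ε)) := by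
  set B : ℝ := (volume (Metric.ball (0 : EuclideanSpace ℝ (Fin 3)) 1)).toReal with hB
  have hBpos : 0 < B := by
    rw [hB]
    exact ENNReal.toReal_pos (Metric.measure_ball_pos volume _ one_pos).ne' measure_ball_lt_top.ne
  refine ⟨12 * B, by positivity, fun kF ε R hkF hε hR => ?_⟩
  set f : ℝ → ℝ := Set.indicator (Set.Icc kF R) (fun r => 1 / (r ^ 2 - kF ^ 2 + ε)) with hf
  have hsetS : {k : EuclideanSpace ℝ (Fin 3) | kF ≤ ‖k‖ ∧ ‖k‖ ≤ R} =
      (fun k : EuclideanSpace ℝ (Fin 3) => ‖k‖) ⁻¹' (Set.Icc kF R) := rfl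
  have hmeas : MeasurableSet {k : EuclideanSpace ℝ (Fin 3) | kF ≤ ‖k‖ ∧ ‖k‖ ≤ R} := by
    rw [hsetS]
    exact measurableSet_Icc.preimage continuous_norm.measurable
  have h1 : (∫ k in {k : EuclideanSpace ℝ (Fin 3) | kF ≤ ‖k‖ ∧ ‖k‖ ≤ R},
      1 / (‖k‖ ^ 2 - kF ^ 2 + ε)) = ∫ x : EuclideanSpace ℝ (Fin 3), f ‖x‖ := by
    rw [← MeasureTheory.integral_indicator hmeas]
    have heq : (Set.indicator {k : EuclideanSpace ℝ (Fin 3) | kF ≤ ‖k‖ ∧ ‖k‖ ≤ R}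
        (fun k => 1 / (‖k‖ ^ 2 - kF ^ 2 + ε))) = fun x => f ‖x‖ := by
      funext x
      simp only [hf, Set.indicator_apply, Set.mem_Icc, Set.mem_setOf_eq]
    rw [heq]
  have h2 : ∫ y in Set.Ioi (0:ℝ), y ^ 2 • f y =
      ∫ y in Set.Icc kF R, y ^ 2 * (1 / (y ^ 2 - kF ^ 2 + ε)) := by
    have hind : ∀ y : ℝ, y ^ 2 • f y = Set.indicator (Set.Icc kF R)
        (fun y => y ^ 2 * (1 / (y ^ 2 - kF ^ 2 + ε))) y := by
      intro y
      by_cases hy : y ∈ Set.Icc kF R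
      · rw [hf, Set.indicator_of_mem hy, Set.indicator_of_mem hy, smul_eq_mul]
      · rw [hf, Set.indicator_of_notMem hy, Set.indicator_of_notMem hy, smul_zero]
    simp_rw [hind]
    rw [MeasureTheory.setIntegral_indicator measurableSet_Icc]
    have hinter : Set.Ioi (0:ℝ) ∩ Set.Icc kF R = Set.Icc kF R := by
      apply Set.inter_eq_right.mpr
      intro y hy
      exact lt_of_lt_of_le hkF hy.1
    rw [hinter]
  rw [h1, MeasureTheory.integral_fun_norm_addHaar volume f]
  rw [finrank_euclideanSpace_fin]
  rw [h2]
  have hone := fermi_oneD_bound kF ε R hkF hε hR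
  rw [nsmul_eq_mul, smul_eq_mul, measureReal_def, ← hB]
  push_cast
  calc (3:ℝ) * (B * ∫ y in Set.Icc kF R, y ^ 2 * (1 / (y ^ 2 - kF ^ 2 + ε)))
      ≤ 3 * (B * (4 * (R + kF * Real.log (1 + kF ^ 2 / ε)))) := by
        apply mul_le_mul_of_nonneg_left (mul_le_mul_of_nonneg_left hone hBpos.le) (by norm_num)
    _ = 12 * B * (R + kF * Real.log (1 + kF ^ 2 / ε)) := by ring
end
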